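/- arXiv:2401.13520 — 8 statements merged into one kernel-verified Lean document; each statement's English description precedes it below -/
import Mathlib

section
/- Let $G = L \rtimes H$ be a semidirect product of groups. Then $H$ is almost malnormal in $G$ (meaning $gHg^{-1} \cap H$ is finite for all $g \in G \setminus H$) if and only if for every nontrivial $\ell \in L$, the stabilizer $\{h \in H \mid h \cdot \ell = \ell\}$ of $\ell$ under the conjugation action of $H$ on $L$ is finite. -/
open SemidirectProduct

private lemma mem_inr_range' {L H : Type*} [Group L] [Group H] {φ : H →* MulAut L}
    (x : L ⋊[φ] H) : x ∈ (inr.range : Subgroup (L ⋊[φ] H)) ↔ x.left = 1 := by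
  constructor
  · rintro ⟨k, rfl⟩; rfl
  · intro h; exact ⟨x.right, by ext <;> simp [h]⟩

private lemma conj_inr' {L H : Type*} [Group L] [Group H] {φ : H →* MulAut L}
    (g : L ⋊[φ] H) (k : H) :
    g * inr k * g⁻¹ =
      ⟨g.left * φ (g.right * k * g.right⁻¹) g.left⁻¹, g.right * k * g.right⁻¹⟩ := by
  ext <;> simp [mul_assoc]

private lemma conj_set_eq' {L H : Type*} [Group L] [Group H] {φ : H →* MulAut L}
    (g : L ⋊[φ] H) :
    (((fun x => g * x * g⁻¹) ''
        ((inr.range : Subgroup (L ⋊[φ] H)) : Set (L ⋊[φ] H))) ∩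
      ((inr.range : Subgroup (L ⋊[φ] H)) : Set (L ⋊[φ] H))) =
    inr '' {m : H | φ m g.left = g.left} := by
  ext x
  simp only [Set.mem_inter_iff, Set.mem_image, SetLike.mem_coe]
  constructor
  · rintro ⟨⟨y, hy, rfl⟩, hx⟩
    obtain ⟨k, rfl⟩ := hy
    rw [mem_inr_range', conj_inr'] at hx
    refine ⟨g.right * k * g.right⁻¹, ?_, ?_⟩
    · have h : g.left * (φ (g.right * k * g.right⁻¹)) g.left⁻¹ = 1 := hx
      rw [map_inv, mul_inv_eq_one] at h
      exact h.symm
    · have h : g.left * (φ (g.right * k * g.right⁻¹)) g.left⁻¹ = 1 := hx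
      rw [conj_inr']
      exact SemidirectProduct.ext hx.symm rfl
  · rintro ⟨m, hm, rfl⟩
    refine ⟨⟨inr (g.right⁻¹ * m * g.right), ⟨_, rfl⟩, ?_⟩, ⟨m, rfl⟩⟩
    have hm' : (φ m) g.left = g.left := hm
    rw [conj_inr']; ext <;> simp [mul_assoc, hm']

/-- In a semidirect product `G = L ⋊ H`, the subgroup `H` is almost malnormal
(i.e. `g H g⁻¹ ∩ H` is finite for every `g ∉ H`) if and only if the conjugation
action of `H` on `L` has finite stabilizers of nontrivial elements. -/
theorem almost_malnormal_iff_finite_stabilizers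
    {L H : Type*} [Group L] [Group H] (φ : H →* MulAut L) :
    (∀ g : L ⋊[φ] H, g ∉ SemidirectProduct.inr.range →
      (((fun x => g * x * g⁻¹) ''
          ((SemidirectProduct.inr.range : Subgroup (L ⋊[φ] H)) : Set (L ⋊[φ] H))) ∩
        ((SemidirectProduct.inr.range : Subgroup (L ⋊[φ] H)) : Set (L ⋊[φ] H))).Finite) ↔
    (∀ ℓ : L, ℓ ≠ 1 → {h : H | φ h ℓ = ℓ}.Finite) := by
  constructor
  · intro hmal ℓ hℓ
    have hg : (inl ℓ : L ⋊[φ] H) ∉ inr.range := by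
      rw [mem_inr_range']; simpa using hℓ
    have := hmal (inl ℓ) hg
    rw [conj_set_eq'] at this
    have h2 := this.preimage (inr_injective.injOn)
    simpa [Set.preimage_image_eq _ inr_injective] using h2
  · intro hst g hg
    rw [conj_set_eq']
    rw [mem_inr_range'] at hg
    exact (hst g.left hg).image _
end

section
/- Let $\mathscr{L}H = L(H) \rtimes H$ be a halo product, where the halo $\mathscr{L}$ is over the group $H$ and $H$ acts on $L(H)$ so that $h \cdot L(S) = L(hS)$ for all $S \subseteq H$ and $h \in H$. If $g \in \mathscr{L}H$ satisfies that $gHg^{-1} \cap H$ is infinite (where $H$ is identified with the subgroup $\{1\} \rtimes H$), then $g \in H$. -/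
/-- A halo of groups over a set `X`, with ambient group `G = L(X)`. -/
structure Halo (X : Type*) (G : Type*) [Group G] where
  L : Set X → Subgroup G
  mono : ∀ ⦃R S : Set X⦄, R ⊆ S → L R ≤ L S
  empty_eq_bot : L ∅ = ⊥
  univ_eq_top : L Set.univ = ⊤
  gen : (⨆ (S : Set X) (_ : S.Finite), L S) = ⊤
  inter : ∀ R S : Set X, L R ⊓ L S = L (R ∩ S)
  supp : G → Set X
  mem_supp : ∀ g : G, g ∈ L (supp g)
  supp_min : ∀ (g : G) (S : Set X), g ∈ L S → supp g ⊆ S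

/-- Lemma 3.16: in a halo product `L(H) ⋊ H` (where the action of `H` translates
the halo subgroups: `α h (L S) = L (h S)`), if `g H g⁻¹ ∩ H` is infinite then
`g ∈ H`. -/
theorem halo_product_conj_infinite {H G : Type*} [Group H] [Group G]
    (halo : Halo H G) (α : H →* MulAut G)
    (hα : ∀ (h : H) (S : Set H),
      (halo.L S).map (α h).toMonoidHom = halo.L ((fun x => h * x) '' S))
    (g : G ⋊[α] H)
    (hg : (((fun x => g * x * g⁻¹) ''
        ((SemidirectProduct.inr.range : Subgroup (G ⋊[α] H)) : Set (G ⋊[α] H))) ∩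
      ((SemidirectProduct.inr.range : Subgroup (G ⋊[α] H)) : Set (G ⋊[α] H))).Infinite) :
    g ∈ (SemidirectProduct.inr.range : Subgroup (G ⋊[α] H)) := by
  classical
  set c := g.left with hc
  by_cases hc1 : c = 1
  · exact ⟨g.right, by ext <;> simp [← hc, hc1]⟩
  · exfalso
    -- c has finite support
    have hfin : ∃ S : Set H, S.Finite ∧ c ∈ halo.L S := by
      have hctop : c ∈ (⊤ : Subgroup G) := trivial
      rw [← halo.gen, iSup_subtype'] at hctop
      have hι : Nonempty {S : Set H // S.Finite} := ⟨⟨∅, Set.finite_empty⟩⟩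
      have hdir : Directed (· ≤ ·) (fun S : {S : Set H // S.Finite} => halo.L S.1) :=
        fun R S => ⟨⟨R.1 ∪ S.1, R.2.union S.2⟩,
          halo.mono Set.subset_union_left, halo.mono Set.subset_union_right⟩
      rw [Subgroup.mem_iSup_of_directed hdir] at hctop
      obtain ⟨⟨S, hS⟩, hcS⟩ := hctop
      exact ⟨S, hS, hcS⟩
    obtain ⟨S, hSfin, hcS⟩ := hfin
    have hsuppfin : (halo.supp c).Finite := hSfin.subset (halo.supp_min c S hcS)
    have hne : (halo.supp c).Nonempty := by
      rcases Set.eq_empty_or_nonempty (halo.supp c) with he | hne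
      · exact absurd (by simpa [he, halo.empty_eq_bot] using halo.mem_supp c) hc1
      · exact hne
    obtain ⟨s₀, hs₀⟩ := hne
    set F : Set H := (fun s => s₀ * s⁻¹) '' halo.supp c with hF
    have hFfin : F.Finite := hsuppfin.image _
    -- every x in the intersection set has x.left = 1 and α x.right c = c, with x.right ∈ F
    set T := (((fun x => g * x * g⁻¹) ''
        ((SemidirectProduct.inr.range : Subgroup (G ⋊[α] H)) : Set (G ⋊[α] H))) ∩
      ((SemidirectProduct.inr.range : Subgroup (G ⋊[α] H)) : Set (G ⋊[α] H))) with hT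
    have key : ∀ x ∈ T, x.left = 1 ∧ (α x.right) c = c := by
      rintro x ⟨⟨y, ⟨q, rfl⟩, rfl⟩, ⟨r, hr⟩⟩
      replace hr : SemidirectProduct.inr r = g * SemidirectProduct.inr q * g⁻¹ := hr
      have hleft : (g * SemidirectProduct.inr q * g⁻¹).left = 1 := by
        rw [← hr]; simp
      constructor
      · exact hleft
      · have hL : (g * SemidirectProduct.inr q * g⁻¹).left
            = c * (α ((g * SemidirectProduct.inr q * g⁻¹).right)) c⁻¹ := by
          simp [SemidirectProduct.mul_left, SemidirectProduct.mul_right,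
            SemidirectProduct.inv_left, SemidirectProduct.inv_right, ← hc, map_mul]
        rw [hleft] at hL
        have h1 : c * (α ((g * SemidirectProduct.inr q * g⁻¹).right)) c⁻¹ = 1 := hL.symm
        have h2 := mul_eq_one_iff_eq_inv.mp h1
        simpa using h2.symm
    have hmem : ∀ x ∈ T, x.right ∈ F := by
      intro x hx
      obtain ⟨-, hαc⟩ := key x hx
      set p := x.right
      have hmap : c ∈ (halo.L (halo.supp c)).map (α p).toMonoidHom :=
        ⟨c, halo.mem_supp c, hαc⟩
      rw [hα] at hmap
      have hsub := halo.supp_min c _ hmap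
      obtain ⟨s, hs, hps⟩ := hsub hs₀
      exact ⟨s, hs, by rw [← hps]; group⟩
    have hTfin : T.Finite := by
      refine Set.Finite.of_finite_image (f := fun x => x.right)
        (hFfin.subset ?_) ?_
      · rintro _ ⟨x, hx, rfl⟩; exact hmem x hx
      · intro x hx y hy hxy
        obtain ⟨hx1, -⟩ := key x hx
        obtain ⟨hy1, -⟩ := key y hy
        ext
        · rw [hx1, hy1]
        · exact hxy
    exact hg hTfin
end

section
/- Let $X$ be a set and let $R, S, T, U \subseteq X$ be subsets with $R \cap S = R \cap T = R \cap U = S \cap T = \emptyset$. For the halo of groups of finitely supported permutations (i.e. $L(Y) := \mathrm{FSym}(Y)$, the finitely supported permutations of $X$ supported in $Y$, for each $Y \subseteq X$), the inclusion $L(R \cup S) \cdot L(U) \cap L(R \cup T) \subseteq L(R) \cdot L(T)$ holds. That is: if $\sigma$ is a finitely supported permutation of $X$ supported in $R \cup S$, $\nu$ is supported in $U$, and the product $\sigma\nu$ is supported in $R \cup T$, then $\sigma\nu$ can be written as a product of a permutation supported in $R$ with a permutation supported in $T$. -/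
/-!
Put `π = σν`. Points of `R` are fixed by `ν`, so `π` sends `R` into
`(R ∪ S) ∩ (R ∪ T) = R`. Being finitely supported, `π` then permutes `R`: an injective
self-map of the finite set of points of `R` moved by `π` is onto. So `π` splits as its
restriction to `R` times its restriction to the complement of `R`, and the latter is
supported in `T`.
-/

open Set

namespace Equiv.Perm

variable {X : Type*}

lemma apply_mem_iff_of_fixes_compl {f : Perm X} {A : Set X} (hf : ∀ x, x ∉ A → f x = x)
    (x : X) : f x ∈ A ↔ x ∈ A := by
  refine ⟨fun hfx => ?_, fun hx => ?_⟩
  · by_contra hx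
    rw [hf x hx] at hfx
    exact hx hfx
  · by_contra hfx
    rw [f.injective (hf (f x) hfx)] at hfx
    exact hfx hx

lemma setOf_mul_apply_ne_subset (f g : Perm X) :
    {x | (f * g) x ≠ x} ⊆ {x | f x ≠ x} ∪ {x | g x ≠ x} := by
  intro x hx
  by_contra h
  simp only [mem_union, mem_ofPred_eq, not_or, not_not] at h
  exact hx (by rw [mul_apply, h.2, h.1])

lemma apply_mem_iff_of_mapsTo {f : Perm X} {A : Set X} (hfin : {x | f x ≠ x}.Finite)
    (hA : MapsTo f A A) (x : X) : f x ∈ A ↔ x ∈ A := by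
  refine ⟨fun hfx => ?_, fun hx => hA hx⟩
  by_contra hx
  have hmoved : f x ≠ x := fun h => hx (h ▸ hfx)
  set F := A ∩ {y | f y ≠ y}
  have hF : MapsTo f F F := fun y hy => ⟨hA hy.1, fun h => hy.2 (f.injective h)⟩
  have hsurj : SurjOn f F F :=
    ((hfin.subset inter_subset_right).injOn_iff_bijOn_of_mapsTo hF).mp f.injective.injOn |>.surjOn
  obtain ⟨z, hzF, hz⟩ := hsurj ⟨hfx, fun h => hmoved (f.injective h)⟩
  exact hx (f.injective hz ▸ hzF.1)

variable {p : X → Prop} [DecidablePred p]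

lemma setOf_ofSubtype_subtypePerm_apply_ne_subset {f : Perm X} (hf : ∀ x, p (f x) ↔ p x) :
    {x | ofSubtype (f.subtypePerm hf) x ≠ x} ⊆ {x | f x ≠ x} := by
  intro x hx
  by_cases hpx : p x
  · rwa [mem_ofPred_eq, ofSubtype_subtypePerm_of_mem hf hpx] at hx
  · exact absurd (ofSubtype_subtypePerm_of_not_mem hf hpx) hx

lemma eq_ofSubtype_subtypePerm_mul_ofSubtype_subtypePerm {f : Perm X}
    (hf : ∀ x, p (f x) ↔ p x) :
    f = ofSubtype (f.subtypePerm hf) *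
      ofSubtype (f.subtypePerm (p := fun y => ¬p y) fun x => not_congr (hf x)) := by
  ext x
  by_cases hpx : p x
  · rw [mul_apply, ofSubtype_subtypePerm_of_not_mem (p := fun y => ¬p y) _ (not_not_intro hpx),
      ofSubtype_subtypePerm_of_mem hf hpx]
  · rw [mul_apply, ofSubtype_subtypePerm_of_mem (p := fun y => ¬p y) _ hpx,
      ofSubtype_subtypePerm_of_not_mem hf ((hf x).not.mpr hpx)]

end Equiv.Perm

open Equiv Perm

theorem fsym_full_general {X : Type*} (R S T U : Set X)
    (hRU : R ∩ U = ∅) (hST : S ∩ T = ∅)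
    (σ ν : Equiv.Perm X)
    (hσ : ∀ x, x ∉ R ∪ S → σ x = x) (hσf : {x | σ x ≠ x}.Finite)
    (hν : ∀ x, x ∉ U → ν x = x) (hνf : {x | ν x ≠ x}.Finite)
    (hσν : ∀ x, x ∉ R ∪ T → (σ * ν) x = x) :
    ∃ a b : Equiv.Perm X,
      (∀ x, x ∉ R → a x = x) ∧ {x | a x ≠ x}.Finite ∧
      (∀ x, x ∉ T → b x = x) ∧ {x | b x ≠ x}.Finite ∧
      σ * ν = a * b := by
  classical
  set π := σ * ν
  have hπf : {x | π x ≠ x}.Finite := (hσf.union hνf).subset (setOf_mul_apply_ne_subset σ ν)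
  have hπR : MapsTo π R R := by
    intro x hx
    have hνx : ν x = x := hν x fun hxU => hRU.subset ⟨hx, hxU⟩
    have hRS : π x ∈ R ∪ S := by
      rw [mul_apply, hνx, apply_mem_iff_of_fixes_compl hσ]; exact Or.inl hx
    have hRT : π x ∈ R ∪ T := (apply_mem_iff_of_fixes_compl hσν x).mpr (Or.inl hx)
    have hRST : π x ∈ (R ∪ S) ∩ (R ∪ T) := ⟨hRS, hRT⟩
    rwa [← union_inter_distrib_left, hST, union_empty] at hRST
  have hπ := apply_mem_iff_of_mapsTo hπf hπR
  refine ⟨ofSubtype (π.subtypePerm hπ),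
    ofSubtype (π.subtypePerm (p := (· ∉ R)) fun x => not_congr (hπ x)),
    fun x hx => ofSubtype_subtypePerm_of_not_mem hπ hx,
    hπf.subset (setOf_ofSubtype_subtypePerm_apply_ne_subset hπ), fun x hxT => ?_,
    hπf.subset (setOf_ofSubtype_subtypePerm_apply_ne_subset _),
    eq_ofSubtype_subtypePerm_mul_ofSubtype_subtypePerm hπ⟩
  by_cases hxR : x ∈ R
  · exact ofSubtype_subtypePerm_of_not_mem (p := (· ∉ R)) _ (not_not_intro hxR)
  · rw [ofSubtype_subtypePerm_of_mem (p := (· ∉ R)) _ hxR]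
    exact hσν x fun h => h.elim hxR hxT

/-- Fullness of the halo of finitely supported permutations: if `σ` is a finitely
supported permutation supported in `R ∪ S`, `ν` is supported in `U`, and `σν` is
supported in `R ∪ T`, with `R ∩ S = R ∩ T = R ∩ U = S ∩ T = ∅`, then `σν` is a
product of a finitely supported permutation supported in `R` with one supported
in `T`. -/
theorem fsym_full {X : Type*} (R S T U : Set X)
    (hRS : R ∩ S = ∅) (hRT : R ∩ T = ∅) (hRU : R ∩ U = ∅) (hST : S ∩ T = ∅)
    (σ ν : Equiv.Perm X)
    (hσ : ∀ x, x ∉ R ∪ S → σ x = x) (hσf : {x | σ x ≠ x}.Finite)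
    (hν : ∀ x, x ∉ U → ν x = x) (hνf : {x | ν x ≠ x}.Finite)
    (hσν : ∀ x, x ∉ R ∪ T → (σ * ν) x = x) :
    ∃ a b : Equiv.Perm X,
      (∀ x, x ∉ R → a x = x) ∧ {x | a x ≠ x}.Finite ∧
      (∀ x, x ∉ T → b x = x) ∧ {x | b x ≠ x}.Finite ∧
      σ * ν = a * b :=
  fsym_full_general R S T U hRU hST σ ν hσ hσf hν hνf hσν
end

section
/- Let $p$ be a prime, $q \geq 2$ an integer not divisible by $p$, and for $m \geq 1$ set $N(m) := \prod_{j=1}^{m} (q^j - 1)$. Then there exists a constant $C > 0$ such that for all $m \geq 2$, $\mathrm{val}_p(N(m)) \leq C \cdot m \log m$. More precisely, with $Q := \ln(q)/\ln(p)$, one has $\mathrm{val}_p(N(m)) \leq m Q \ln(m) + O(m)$. -/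
open Finset

-- Step: per-k counting bound
lemma countBound (p q : ℕ) (hp : p.Prime) (hq : 2 ≤ q) (m k : ℕ) (hk : 1 ≤ k) :
    (((Finset.Icc 1 m).filter fun j => p ^ k ∣ q ^ j - 1).card : ℝ) ≤
      (m : ℝ) * (Real.log q / Real.log p) / k := by
  have hp2 : 2 ≤ p := hp.two_le
  have hlogp : 0 < Real.log p := Real.log_pos (by exact_mod_cast hp2)
  have hlogq : 0 < Real.log q := Real.log_pos (by exact_mod_cast hq)
  set S := (Finset.Icc 1 m).filter fun j => p ^ k ∣ q ^ j - 1 with hS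
  rcases S.eq_empty_or_nonempty with h | h
  · rw [h]
    simp only [card_empty, Nat.cast_zero]
    positivity
  · set d := S.min' h with hdd
    have hdS : d ∈ S := S.min'_mem h
    have hdIcc : d ∈ Finset.Icc 1 m := (mem_filter.mp hdS).1
    have hddvd : p ^ k ∣ q ^ d - 1 := (mem_filter.mp hdS).2
    have hd1 : 1 ≤ d := (mem_Icc.mp hdIcc).1
    have hdm : d ≤ m := (mem_Icc.mp hdIcc).2
    -- cast divisibility to ℤ helper
    have hcast : ∀ j : ℕ, 1 ≤ j → (p ^ k ∣ q ^ j - 1 ↔ (p : ℤ) ^ k ∣ (q : ℤ) ^ j - 1) := by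
      intro j hj
      have h1 : 1 ≤ q ^ j := Nat.one_le_pow _ _ (by omega)
      rw [← Int.natCast_dvd_natCast]
      push_cast [Nat.cast_sub h1]
      rfl
    -- every element of S is divisible by d
    have key : ∀ j, j ∈ S → d ∣ j := by
      intro j
      induction j using Nat.strong_induction_on with
      | _ j ih =>
        intro hj
        have hjIcc := (mem_filter.mp hj).1
        have hjdvd := (mem_filter.mp hj).2
        have hj1 : 1 ≤ j := (mem_Icc.mp hjIcc).1
        have hjm : j ≤ m := (mem_Icc.mp hjIcc).2
        have hdj : d ≤ j := S.min'_le j hj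
        rcases eq_or_lt_of_le hdj with hcase | hcase
        · exact hcase ▸ dvd_refl d
        · have hsub : j - d ∈ S := by
            rw [hS, mem_filter, mem_Icc]
            refine ⟨⟨by omega, by omega⟩, ?_⟩
            rw [hcast (j - d) (by omega)]
            have h1 : (p : ℤ) ^ k ∣ (q : ℤ) ^ j - 1 := (hcast j hj1).mp hjdvd
            have h2 : (p : ℤ) ^ k ∣ (q : ℤ) ^ d - 1 := (hcast d hd1).mp hddvd
            have h3 : (q : ℤ) ^ (j - d) - 1 =
                ((q : ℤ) ^ j - 1) - (q : ℤ) ^ (j - d) * ((q : ℤ) ^ d - 1) := by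
              have : (q : ℤ) ^ (j - d) * (q : ℤ) ^ d = (q : ℤ) ^ j := by
                rw [← pow_add]
                congr 1
                omega
              linear_combination this
            rw [h3]
            exact dvd_sub h1 (Dvd.dvd.mul_left h2 _)
          have hdvd' := ih (j - d) (by omega) hsub
          have : d ∣ (j - d) + d := hdvd'.add dvd_rfl
          rwa [Nat.sub_add_cancel hdj] at this
    -- S ⊆ multiples of d in Ioc 0 m
    have hsubset : S ⊆ (Finset.Ioc 0 m).filter fun x => d ∣ x := by
      intro j hj
      rw [mem_filter, mem_Ioc]
      have hjIcc := (mem_filter.mp hj).1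
      rw [mem_Icc] at hjIcc
      exact ⟨⟨by omega, hjIcc.2⟩, key j hj⟩
    have hcard : S.card ≤ m / d := by
      calc S.card ≤ ((Finset.Ioc 0 m).filter fun x => d ∣ x).card := card_le_card hsubset
        _ = m / d := Nat.Ioc_filter_dvd_card_eq_div m d
    -- p^k ≤ q^d
    have hpk : p ^ k ≤ q ^ d := by
      have hpos : 0 < q ^ d - 1 := by
        have : 2 ≤ q ^ d := by
          calc 2 = 2 ^ 1 := rfl
            _ ≤ q ^ d := Nat.pow_le_pow_left hq d |>.trans' (Nat.pow_le_pow_right (by omega) hd1) |>.trans (le_refl _)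
        omega
      have := Nat.le_of_dvd hpos hddvd
      omega
    -- k ≤ d * (log q / log p)
    have hklog : (k : ℝ) ≤ (d : ℝ) * (Real.log q / Real.log p) := by
      have h1 : Real.log ((p : ℝ) ^ k) ≤ Real.log ((q : ℝ) ^ d) := by
        apply Real.log_le_log (by positivity)
        exact_mod_cast hpk
      rw [Real.log_pow, Real.log_pow] at h1
      rw [← mul_div_assoc, le_div_iff₀ hlogp]
      exact h1
    -- conclude
    have hdR : (0 : ℝ) < d := by exact_mod_cast hd1
    have hkR : (0 : ℝ) < k := by exact_mod_cast hk
    calc (S.card : ℝ) ≤ ((m / d : ℕ) : ℝ) := by exact_mod_cast hcard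
      _ ≤ (m : ℝ) / d := Nat.cast_div_le
      _ ≤ (m : ℝ) * (Real.log q / Real.log p) / k := by
          rw [div_le_div_iff₀ hdR hkR]
          calc (m : ℝ) * k ≤ (m : ℝ) * ((d : ℝ) * (Real.log q / Real.log p)) := by
                apply mul_le_mul_of_nonneg_left hklog (by positivity)
            _ = (m : ℝ) * (Real.log q / Real.log p) * d := by ring
lemma mainBound (p q : ℕ) (hp : p.Prime) (hq : 2 ≤ q) (hpq : ¬ p ∣ q) (m : ℕ) (hm : 1 ≤ m) :
    (padicValNat p (∏ j ∈ Finset.Icc 1 m, (q ^ j - 1)) : ℝ) ≤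
      (m : ℝ) * (Real.log q / Real.log p) * (1 + Real.log ((q : ℝ) * m)) := by
  have hp2 := hp.two_le
  have hlogp : 0 < Real.log p := Real.log_pos (by exact_mod_cast hp2)
  have hlogq : 0 < Real.log q := Real.log_pos (by exact_mod_cast hq)
  set K := q * m with hK
  have hfacpos : ∀ j ∈ Finset.Icc 1 m, 0 < q ^ j - 1 := by
    intro j hj
    have hj1 : 1 ≤ j := (Finset.mem_Icc.mp hj).1
    have : 2 ≤ q ^ j := le_trans hq (Nat.le_self_pow (by omega) q)
    omega
  have h1 : padicValNat p (∏ j ∈ Finset.Icc 1 m, (q ^ j - 1)) =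
      ∑ j ∈ Finset.Icc 1 m, padicValNat p (q ^ j - 1) := by
    rw [← Nat.factorization_def _ hp,
      Nat.factorization_prod (fun j hj => (hfacpos j hj).ne'), Finset.sum_apply']
    simp_rw [Nat.factorization_def _ hp]
  have hvle : ∀ j ∈ Finset.Icc 1 m, padicValNat p (q ^ j - 1) ≤ K := by
    intro j hj
    have hj1 : 1 ≤ j := (Finset.mem_Icc.mp hj).1
    have hjm : j ≤ m := (Finset.mem_Icc.mp hj).2
    have hpos := hfacpos j hj
    have hd : p ^ padicValNat p (q ^ j - 1) ∣ q ^ j - 1 := pow_padicValNat_dvd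
    have h2 : 2 ^ padicValNat p (q ^ j - 1) ≤ q ^ j - 1 :=
      le_trans (Nat.pow_le_pow_left hp2 _) (Nat.le_of_dvd hpos hd)
    have h3 : q ^ j ≤ 2 ^ K := by
      calc q ^ j ≤ (2 ^ q) ^ j := Nat.pow_le_pow_left (Nat.lt_two_pow_self (n := q)).le j
        _ = 2 ^ (q * j) := by rw [← pow_mul]
        _ ≤ 2 ^ K := Nat.pow_le_pow_right (by omega) (Nat.mul_le_mul_left q hjm)
    have h4 : 2 ^ padicValNat p (q ^ j - 1) < 2 ^ K := by omega
    exact le_of_lt ((Nat.pow_lt_pow_iff_right (by norm_num)).mp h4)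
  have hcount : ∀ j ∈ Finset.Icc 1 m, padicValNat p (q ^ j - 1) =
      ((Finset.Icc 1 K).filter fun k => p ^ k ∣ q ^ j - 1).card := by
    intro j hj
    have hne := (hfacpos j hj).ne'
    have hiff : ∀ k : ℕ, p ^ k ∣ q ^ j - 1 ↔ k ≤ padicValNat p (q ^ j - 1) := by
      intro k
      rw [Nat.Prime.pow_dvd_iff_le_factorization hp hne, Nat.factorization_def _ hp]
    have heq : (Finset.Icc 1 K).filter (fun k => p ^ k ∣ q ^ j - 1) =
        Finset.Icc 1 (padicValNat p (q ^ j - 1)) := by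
      ext a
      simp only [Finset.mem_filter, Finset.mem_Icc, hiff]
      have := hvle j hj
      omega
    rw [heq, Nat.card_Icc]
    omega
  rw [h1]
  push_cast
  calc (∑ j ∈ Finset.Icc 1 m, (padicValNat p (q ^ j - 1) : ℝ))
      = ∑ j ∈ Finset.Icc 1 m,
          ((((Finset.Icc 1 K).filter fun k => p ^ k ∣ q ^ j - 1).card : ℕ) : ℝ) := by
        apply Finset.sum_congr rfl
        intro j hj
        exact congrArg Nat.cast (hcount j hj)
    _ = ∑ k ∈ Finset.Icc 1 K,
          ((((Finset.Icc 1 m).filter fun j => p ^ k ∣ q ^ j - 1).card : ℕ) : ℝ) := by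
        simp_rw [Finset.card_filter]
        push_cast
        rw [Finset.sum_comm]
    _ ≤ ∑ k ∈ Finset.Icc 1 K, (m : ℝ) * (Real.log q / Real.log p) / k := by
        apply Finset.sum_le_sum
        intro k hk
        exact countBound p q hp hq m k (Finset.mem_Icc.mp hk).1
    _ = (m : ℝ) * (Real.log q / Real.log p) * ∑ k ∈ Finset.Icc 1 K, ((k : ℝ))⁻¹ := by
        rw [Finset.mul_sum]
        apply Finset.sum_congr rfl
        intro k _
        rw [div_eq_mul_inv]
    _ ≤ (m : ℝ) * (Real.log q / Real.log p) * (1 + Real.log K) := by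
        apply mul_le_mul_of_nonneg_left _ (by positivity)
        have hh : ∑ k ∈ Finset.Icc 1 K, ((k : ℝ))⁻¹ = ((harmonic K : ℚ) : ℝ) := by
          rw [harmonic_eq_sum_Icc]
          push_cast
          rfl
        rw [hh]
        exact harmonic_le_one_add_log K
    _ = (m : ℝ) * (Real.log q / Real.log p) * (1 + Real.log ((q : ℝ) * m)) := by
        rw [hK]
        push_cast
        ring



/-- Lemma 8.8: for a prime `p` and `q ≥ 2` not divisible by `p`, the `p`-adic
valuation of `N(m) = ∏_{j=1}^m (q^j - 1)` is `O(m log m)`; more precisely it is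
at most `m (log q / log p) log m + O(m)`. -/
theorem valuation_qpochhammer_bound (p q : ℕ) (hp : p.Prime) (hq : 2 ≤ q) (hpq : ¬ p ∣ q) :
    (∃ C : ℝ, 0 < C ∧ ∀ m : ℕ, 2 ≤ m →
      (padicValNat p (∏ j ∈ Finset.Icc 1 m, (q ^ j - 1)) : ℝ) ≤ C * m * Real.log m) ∧
    (∃ C : ℝ, ∀ m : ℕ, 1 ≤ m →
      (padicValNat p (∏ j ∈ Finset.Icc 1 m, (q ^ j - 1)) : ℝ) ≤
        (m : ℝ) * (Real.log q / Real.log p) * Real.log m + C * m) := by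
  have hlogp : 0 < Real.log p := Real.log_pos (by exact_mod_cast hp.two_le)
  have hlogq : 0 < Real.log q := Real.log_pos (by exact_mod_cast hq)
  set Q := Real.log q / Real.log p with hQ
  have hQpos : 0 < Q := by positivity
  set C := Q * (1 + Real.log q) with hC
  have hCpos : 0 < C := by
    apply mul_pos hQpos
    linarith
  have key : ∀ m : ℕ, 1 ≤ m →
      (padicValNat p (∏ j ∈ Finset.Icc 1 m, (q ^ j - 1)) : ℝ) ≤
        (m : ℝ) * Q * Real.log m + C * m := by
    intro m hm
    have h := mainBound p q hp hq hpq m hm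
    have hm0 : (0 : ℝ) < m := by exact_mod_cast hm
    have hq0 : (0 : ℝ) < q := by positivity
    rw [Real.log_mul (ne_of_gt hq0) (ne_of_gt hm0)] at h
    calc (padicValNat p (∏ j ∈ Finset.Icc 1 m, (q ^ j - 1)) : ℝ)
        ≤ (m : ℝ) * Q * (1 + (Real.log q + Real.log m)) := h
      _ = (m : ℝ) * Q * Real.log m + C * m := by rw [hC]; ring
  constructor
  · have hlog2 : 0 < Real.log 2 := Real.log_pos one_lt_two
    refine ⟨Q + C / Real.log 2, by positivity, ?_⟩
    intro m hm
    have h := key m (by omega)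
    have hm2 : (2 : ℝ) ≤ m := by exact_mod_cast hm
    have hlogm : Real.log 2 ≤ Real.log m := Real.log_le_log (by norm_num) hm2
    calc (padicValNat p (∏ j ∈ Finset.Icc 1 m, (q ^ j - 1)) : ℝ)
        ≤ (m : ℝ) * Q * Real.log m + C * m := h
      _ ≤ Q * ((m : ℝ) * Real.log m) + (C / Real.log 2) * ((m : ℝ) * Real.log m) := by
          apply add_le_add
          · apply le_of_eq; ring
          · rw [div_mul_eq_mul_div, le_div_iff₀ hlog2]
            calc C * (m : ℝ) * Real.log 2 ≤ C * (m : ℝ) * Real.log m := by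
                  apply mul_le_mul_of_nonneg_left hlogm
                  have : (0 : ℝ) ≤ m := by positivity
                  exact mul_nonneg hCpos.le this
              _ = C * ((m : ℝ) * Real.log m) := by ring
      _ = (Q + C / Real.log 2) * m * Real.log m := by ring
  · exact ⟨C, fun m hm => key m hm⟩
end

section
/- Suppose $e, f \geq 2$ are integers and there exist sequences of positive integers $(x_n)$ and $(y_n)$ with $y_n \geq n$, and a sublinear error term, such that for every $n$: $e^{y_n}$ divides $f^{x_n}$, and $f^{x_n}$ divides $e^{y_n + z_n}$ where $z_n/n \to 0$, and moreover $x_n = \Theta(y_n)$ (i.e. there are constants $c, C > 0$ with $c\, y_n \leq x_n \leq C\, y_n$). Then: (1) $e$ and $f$ have the same prime divisors; (2) for every prime $p$ dividing $e$ (equivalently $f$), the sequence $x_n/y_n$ converges to $\mathrm{val}_p(e)/\mathrm{val}_p(f)$; (3) consequently there exist an integer $q \geq 2$ and positive integers $r, s$ such that $e = q^r$ and $f = q^s$. -/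
/-!
Comparing `p`-adic valuations in `e ^ y n ∣ f ^ x n ∣ e ^ (y n + z n)` gives, for every prime `p`,
`y n * vₚ(e) ≤ x n * vₚ(f) ≤ (y n + z n) * vₚ(e)`. Hence `vₚ(e)` and `vₚ(f)` vanish together,
and, since `z n / y n → 0`, the ratio `x n / y n` is squeezed to `vₚ(e) / vₚ(f)`. This limit does
not depend on `p`, so `vₚ(e) / vₚ(f)` is a constant `r / s`, i.e. `e ^ s = f ^ r`, which forces
`e` and `f` to be powers of a common integer.
-/

open Filter Topology

lemma mul_padicValNat_le_of_pow_dvd_pow {p a b m n : ℕ} [Fact p.Prime] (hb : b ≠ 0)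
    (h : a ^ m ∣ b ^ n) : m * padicValNat p a ≤ n * padicValNat p b := by
  rw [← padicValNat.pow b n, ← padicValNat_dvd_iff_le (pow_ne_zero n hb), pow_mul']
  exact (pow_dvd_pow_of_dvd pow_padicValNat_dvd m).trans h

lemma tendsto_div_zero_of_le_denom {α : Type*} {l : Filter α} {z d y : α → ℝ}
    (hz : ∀ a, 0 ≤ z a) (hd : ∀ᶠ a in l, 0 < d a ∧ d a ≤ y a)
    (h : Tendsto (fun a => z a / d a) l (𝓝 0)) : Tendsto (fun a => z a / y a) l (𝓝 0) :=
  squeeze_zero' (hd.mono fun a ha => div_nonneg (hz a) (ha.1.le.trans ha.2))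
    (hd.mono fun a ha => div_le_div_of_nonneg_left (hz a) ha.1 ha.2) h

lemma tendsto_div_of_mul_le_mul_le {α : Type*} {l : Filter α} {x y z : α → ℝ} {a b : ℝ}
    (hb : 0 < b) (hy : ∀ i, 0 < y i) (hz : Tendsto (fun i => z i / y i) l (𝓝 0))
    (hlow : ∀ i, y i * a ≤ x i * b) (hup : ∀ i, x i * b ≤ (y i + z i) * a) :
    Tendsto (fun i => x i / y i) l (𝓝 (a / b)) := by
  have hlim : Tendsto (fun i => a / b + a / b * (z i / y i)) l (𝓝 (a / b)) := by
    simpa using tendsto_const_nhds.add (hz.const_mul (a / b))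
  refine tendsto_of_tendsto_of_tendsto_of_le_of_le tendsto_const_nhds hlim (fun i => ?_)
    fun i => ?_
  · rw [div_le_div_iff₀ hb (hy i)]
    linarith [hlow i]
  · calc x i / y i ≤ (y i + z i) * a / (y i * b) := by
          rw [div_le_div_iff₀ (hy i) (mul_pos (hy i) hb)]
          linarith [mul_le_mul_of_nonneg_right (hup i) (hy i).le]
      _ = a / b + a / b * (z i / y i) := by field_simp [(hy i).ne']

lemma pow_eq_pow_of_forall_mul_padicValNat_eq {a b m n : ℕ} (ha : a ≠ 0) (hb : b ≠ 0)
    (h : ∀ p, p.Prime → m * padicValNat p a = n * padicValNat p b) : a ^ m = b ^ n := by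
  rw [Nat.eq_iff_prime_padicValNat_eq _ _ (pow_ne_zero m ha) (pow_ne_zero n hb)]
  intro p hp
  have := Fact.mk hp
  simpa only [padicValNat.pow] using h p hp

lemma two_le_and_pos_of_two_le_pow {c r : ℕ} (h : 2 ≤ c ^ r) : 2 ≤ c ∧ 0 < r := by
  refine ⟨?_, Nat.pos_of_ne_zero fun hr => by simp [hr] at h⟩
  by_contra! hc
  have := pow_le_one₀ (n := r) (Nat.zero_le c) (by omega)
  omega

lemma exists_common_base_of_pow_eq_pow {a b m n : ℕ} (ha : 2 ≤ a) (hb : 2 ≤ b) (hm : m ≠ 0)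
    (h : a ^ m = b ^ n) : ∃ q r s : ℕ, 2 ≤ q ∧ 0 < r ∧ 0 < s ∧ a = q ^ r ∧ b = q ^ s := by
  obtain ⟨q, rfl, rfl⟩ := Nat.exists_eq_pow_of_pow_eq_pow (.inl hm) h
  obtain ⟨hq, hr⟩ := two_le_and_pos_of_two_le_pow ha
  exact ⟨q, _, _, hq, hr, (two_le_and_pos_of_two_le_pow hb).2, rfl, rfl⟩

lemma exists_common_base_of_padicValNat_div_eq {e f : ℕ} (he : 2 ≤ e) (hf : 2 ≤ f)
    (hef : ∀ p, p.Prime → (p ∣ e ↔ p ∣ f)) (ρ : ℝ)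
    (hρ : ∀ p, p.Prime → p ∣ e → (padicValNat p e : ℝ) / padicValNat p f = ρ) :
    ∃ q r s : ℕ, 2 ≤ q ∧ 0 < r ∧ 0 < s ∧ e = q ^ r ∧ f = q ^ s := by
  have hvf_pos : ∀ p, p.Prime → p ∣ e → 0 < padicValNat p f := fun p hp hpe =>
    have := Fact.mk hp
    one_le_padicValNat_of_dvd (by omega) ((hef p hp).1 hpe)
  obtain ⟨p₀, hp₀, hp₀e⟩ := Nat.exists_prime_and_dvd (show e ≠ 1 by omega)
  refine exists_common_base_of_pow_eq_pow he hf (hvf_pos p₀ hp₀ hp₀e).ne' <|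
    pow_eq_pow_of_forall_mul_padicValNat_eq (n := padicValNat p₀ e) (by omega) (by omega)
      fun p hp => ?_
  by_cases hpe : p ∣ e
  · have h := (hρ p hp hpe).trans (hρ p₀ hp₀ hp₀e).symm
    rw [div_eq_div_iff (by exact_mod_cast (hvf_pos p hp hpe).ne')
      (by exact_mod_cast (hvf_pos p₀ hp₀ hp₀e).ne')] at h
    exact_mod_cast (mul_comm _ _).trans h
  · rw [padicValNat.eq_zero_of_not_dvd hpe,
      padicValNat.eq_zero_of_not_dvd fun hpf => hpe ((hef p hp).2 hpf), mul_zero, mul_zero]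

theorem lamplighter_arithmetic_general (e f : ℕ) (he : 2 ≤ e) (hf : 2 ≤ f)
    (x y z : ℕ → ℕ)
    (hx : ∀ n, 0 < x n) (hy0 : ∀ n, 0 < y n) (hy : ∀ n, n ≤ y n)
    (hz : Filter.Tendsto (fun n => (z n : ℝ) / n) Filter.atTop (nhds 0))
    (hdiv1 : ∀ n, e ^ y n ∣ f ^ x n)
    (hdiv2 : ∀ n, f ^ x n ∣ e ^ (y n + z n)) :
    (∀ p : ℕ, p.Prime → (p ∣ e ↔ p ∣ f)) ∧
    (∀ p : ℕ, p.Prime → p ∣ e →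
      Filter.Tendsto (fun n => (x n : ℝ) / y n) Filter.atTop
        (nhds ((padicValNat p e : ℝ) / (padicValNat p f : ℝ)))) ∧
    (∃ q r s : ℕ, 2 ≤ q ∧ 0 < r ∧ 0 < s ∧ e = q ^ r ∧ f = q ^ s) := by
  have hef : ∀ p : ℕ, p.Prime → (p ∣ e ↔ p ∣ f) := fun p hp =>
    ⟨fun h => hp.dvd_of_dvd_pow ((dvd_pow h (hy0 0).ne').trans (hdiv1 0)),
      fun h => hp.dvd_of_dvd_pow ((dvd_pow h (hx 0).ne').trans (hdiv2 0))⟩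
  have hzy : Tendsto (fun n => (z n : ℝ) / y n) atTop (𝓝 0) :=
    tendsto_div_zero_of_le_denom (fun n => Nat.cast_nonneg _)
      ((eventually_ge_atTop 1).mono fun n hn => ⟨mod_cast hn, mod_cast hy n⟩) hz
  have hlim : ∀ p : ℕ, p.Prime → p ∣ e → Tendsto (fun n => (x n : ℝ) / y n) atTop
      (𝓝 ((padicValNat p e : ℝ) / (padicValNat p f : ℝ))) := by
    intro p hp hpe
    have := Fact.mk hp
    refine tendsto_div_of_mul_le_mul_le (z := fun n => (z n : ℝ)) ?_ (fun n => mod_cast hy0 n)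
      hzy (fun n => ?_) (fun n => ?_)
    · exact_mod_cast one_le_padicValNat_of_dvd (by omega) ((hef p hp).1 hpe)
    · exact_mod_cast mul_padicValNat_le_of_pow_dvd_pow (by omega) (hdiv1 n)
    · exact_mod_cast mul_padicValNat_le_of_pow_dvd_pow (by omega) (hdiv2 n)
  obtain ⟨p₀, hp₀, hp₀e⟩ := Nat.exists_prime_and_dvd (show e ≠ 1 by omega)
  exact ⟨hef, hlim, exists_common_base_of_padicValNat_div_eq he hf hef _ fun p hp hpe =>
    tendsto_nhds_unique (hlim p hp hpe) (hlim p₀ hp₀ hp₀e)⟩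

/-- Arithmetic core of Theorem 8.15: if `e, f ≥ 2` and there are sequences
`(x_n), (y_n)` with `y_n ≥ n`, `x_n = Θ(y_n)` and a sublinear `(z_n)` such that
`e^{y_n} ∣ f^{x_n} ∣ e^{y_n + z_n}`, then `e` and `f` have the same prime
divisors, `x_n / y_n → val_p(e)/val_p(f)` for each prime `p ∣ e`, and `e, f`
are powers of a common integer `q`. -/
theorem lamplighter_arithmetic (e f : ℕ) (he : 2 ≤ e) (hf : 2 ≤ f)
    (x y z : ℕ → ℕ)
    (hx : ∀ n, 0 < x n) (hy0 : ∀ n, 0 < y n) (hy : ∀ n, n ≤ y n)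
    (hz : Filter.Tendsto (fun n => (z n : ℝ) / n) Filter.atTop (nhds 0))
    (hdiv1 : ∀ n, e ^ y n ∣ f ^ x n)
    (hdiv2 : ∀ n, f ^ x n ∣ e ^ (y n + z n))
    (c C : ℝ) (hc : 0 < c) (hC : 0 < C)
    (hΘ : ∀ n, c * y n ≤ (x n : ℝ) ∧ (x n : ℝ) ≤ C * y n) :
    (∀ p : ℕ, p.Prime → (p ∣ e ↔ p ∣ f)) ∧
    (∀ p : ℕ, p.Prime → p ∣ e →
      Filter.Tendsto (fun n => (x n : ℝ) / y n) Filter.atTop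
        (nhds ((padicValNat p e : ℝ) / (padicValNat p f : ℝ)))) ∧
    (∃ q r s : ℕ, 2 ≤ q ∧ 0 < r ∧ 0 < s ∧ e = q ^ r ∧ f = q ^ s) :=
  lamplighter_arithmetic_general e f he hf x y z hx hy0 hy hz hdiv1 hdiv2
end

section
/- Suppose $e, f \geq 1$ are integers and there exist sequences of positive integers $(x_n), (y_n)$ with $y_n \geq n$, $x_n = \Theta(y_n)$, and a sequence $z_n$ with $z_n/n \to 0$, such that for every $n$: $e^{y_n} \cdot y_n!$ divides $f^{x_n} \cdot x_n!$, which divides $e^{y_n + z_n} \cdot (y_n + z_n)!$. Then $e = f$. -/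
/-!
Put `w_p(e) = (p - 1) v_p(e) + 1`. By Legendre's formula the two divisibilities say
`w_p(e) y_n ≤ w_p(f) x_n + s_p(y_n)` and `w_p(f) x_n ≤ w_p(e) (y_n + z_n) + s_p(x_n)`, where the
base-`p` digit sums `s_p` grow only logarithmically; hence `w_p(f) x_n - w_p(e) y_n = o(y_n)` for
every prime `p`. A prime `q` dividing neither `e` nor `f` has `w_q(e) = w_q(f) = 1`, so
`x_n - y_n = o(y_n)`, and then `(w_p(f) - w_p(e)) y_n = o(y_n)` forces `v_p(e) = v_p(f)`.
-/

open Filter Asymptotics Nat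

theorem Nat.isLittleO_digits_sum {b : ℕ} (hb : 1 < b) :
    (fun m : ℕ => ((b.digits m).sum : ℝ)) =o[atTop] (fun m => (m : ℝ)) := by
  have hbound (m : ℕ) : ((b.digits m).sum : ℝ) ≤ b * (Real.logb b m + 1) := by
    have hsum : (b.digits m).sum ≤ (b.digits m).length * b := by
      simpa using List.sum_le_card_nsmul _ b fun d hd => (digits_lt_base hb hd).le
    have hlen : (b.digits m).length ≤ Nat.log b m + 1 := by
      rcases eq_or_ne m 0 with rfl | hm
      · simp
      · rw [length_digits b m hb hm]
    calc ((b.digits m).sum : ℝ) ≤ (Nat.log b m + 1) * b := by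
          exact_mod_cast hsum.trans (Nat.mul_le_mul_right b hlen)
      _ ≤ (Real.logb b m + 1) * b := by gcongr; exact Real.natLog_le_logb m b
      _ = b * (Real.logb b m + 1) := mul_comm _ _
  have hlog : (fun m : ℕ => (b : ℝ) * (Real.logb b m + 1)) =o[atTop] (fun m => (m : ℝ)) :=
    ((Real.isLittleO_logb_id_atTop.add (isLittleO_const_id_atTop 1)).comp_tendsto
      tendsto_natCast_atTop_atTop).const_mul_left b
  refine IsBigO.trans_isLittleO (.of_bound' (.of_forall fun m => ?_)) hlog
  rw [Real.norm_of_nonneg (by positivity)]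
  exact (hbound m).trans (le_abs_self _)

/-- `(p - 1)` times the rate of linear growth of `a ↦ v_p(e ^ a * a !)`. -/
def padicGrowthRate (p e : ℕ) : ℕ := (p - 1) * padicValNat p e + 1

theorem padicGrowthRate_eq_one {p e : ℕ} (h : ¬p ∣ e) : padicGrowthRate p e = 1 := by
  simp [padicGrowthRate, padicValNat.eq_zero_of_not_dvd h]

section
variable {p : ℕ} [hp : Fact p.Prime]

theorem padicValNat_eq_of_padicGrowthRate_eq {e f : ℕ}
    (h : padicGrowthRate p e = padicGrowthRate p f) : padicValNat p e = padicValNat p f := by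
  have hp1 : p - 1 ≠ 0 := by have := hp.out.two_le; omega
  simpa [padicGrowthRate, hp1] using h

theorem sub_one_mul_padicValNat_pow_mul_factorial_add_digits_sum {e : ℕ} (he : e ≠ 0)
    (a : ℕ) :
    (p - 1) * padicValNat p (e ^ a * a !) + (p.digits a).sum = padicGrowthRate p e * a := by
  rw [padicValNat.mul (pow_ne_zero a he) (factorial_ne_zero a), padicValNat.pow e a, mul_add,
    sub_one_mul_padicValNat_factorial, add_assoc, Nat.sub_add_cancel (digit_sum_le p a),
    padicGrowthRate]
  ring

theorem padicGrowthRate_mul_le_of_dvd {e f a b : ℕ} (he : e ≠ 0) (hf : f ≠ 0)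
    (h : e ^ a * a ! ∣ f ^ b * b !) :
    padicGrowthRate p e * a ≤ padicGrowthRate p f * b + (p.digits a).sum := by
  have hval : padicValNat p (e ^ a * a !) ≤ padicValNat p (f ^ b * b !) :=
    padicValNat_dvd_iff_le (by positivity) |>.mp (pow_padicValNat_dvd.trans h)
  rw [← sub_one_mul_padicValNat_pow_mul_factorial_add_digits_sum he,
    ← sub_one_mul_padicValNat_pow_mul_factorial_add_digits_sum hf]
  have := Nat.mul_le_mul_left (p - 1) hval
  omega

theorem isLittleO_padicGrowthRate_mul_sub {α : Type*} {l : Filter α} {e f : ℕ} (he : e ≠ 0)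
    (hf : f ≠ 0) {x y z : α → ℕ} (hx : Tendsto x l atTop) (hy : Tendsto y l atTop)
    (hxy : (fun n => (x n : ℝ)) =O[l] (fun n => (y n : ℝ)))
    (hz : (fun n => (z n : ℝ)) =o[l] (fun n => (y n : ℝ)))
    (hdiv1 : ∀ n, e ^ y n * (y n)! ∣ f ^ x n * (x n)!)
    (hdiv2 : ∀ n, f ^ x n * (x n)! ∣ e ^ (y n + z n) * (y n + z n)!) :
    (fun n => (padicGrowthRate p f : ℝ) * x n - padicGrowthRate p e * y n) =o[l]
      (fun n => (y n : ℝ)) := by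
  have hs := Nat.isLittleO_digits_sum hp.out.one_lt
  refine IsBigO.trans_isLittleO (.of_bound' (.of_forall fun n => ?_))
    ((hs.comp_tendsto hy).add (((hs.comp_tendsto hx).trans_isBigO hxy).add
      (hz.const_mul_left (padicGrowthRate p e : ℝ))))
  have h1 : (padicGrowthRate p e : ℝ) * y n ≤
      padicGrowthRate p f * x n + ((p.digits (y n)).sum : ℕ) := by
    exact_mod_cast padicGrowthRate_mul_le_of_dvd he hf (hdiv1 n)
  have h2 : (padicGrowthRate p f : ℝ) * x n ≤
      padicGrowthRate p e * (y n + z n) + ((p.digits (x n)).sum : ℕ) := by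
    exact_mod_cast padicGrowthRate_mul_le_of_dvd hf he (hdiv2 n)
  simp only [Function.comp_apply, Real.norm_eq_abs]
  rw [abs_le, abs_of_nonneg (by positivity)]
  have hsx : (0 : ℝ) ≤ ((p.digits (x n)).sum : ℕ) := Nat.cast_nonneg _
  have hsy : (0 : ℝ) ≤ ((p.digits (y n)).sum : ℕ) := Nat.cast_nonneg _
  have hez : (0 : ℝ) ≤ padicGrowthRate p e * z n := by positivity
  constructor <;> linarith

end

theorem eq_of_isLittleO_sub {α : Type*} {l : Filter α} [l.NeBot] {u v : α → ℝ} {a b : ℝ}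
    (hv : ∀ᶠ n in l, v n ≠ 0) (huv : (fun n => u n - v n) =o[l] v)
    (habuv : (fun n => a * u n - b * v n) =o[l] v) : a = b := by
  by_contra hab
  have : (fun n => (a - b) * v n) =o[l] v :=
    (habuv.sub (huv.const_mul_left a)).congr_left fun n => by ring
  exact isLittleO_irrefl hv.frequently
    ((isLittleO_const_mul_left_iff (sub_ne_zero.mpr hab)).mp this)

theorem lampdesigner_arithmetic_general (e f : ℕ) (he : 1 ≤ e) (hf : 1 ≤ f)
    (x y z : ℕ → ℕ)
    (hy : ∀ n, n ≤ y n)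
    (hz : Filter.Tendsto (fun n => (z n : ℝ) / n) Filter.atTop (nhds 0))
    (hdiv1 : ∀ n, e ^ y n * Nat.factorial (y n) ∣ f ^ x n * Nat.factorial (x n))
    (hdiv2 : ∀ n, f ^ x n * Nat.factorial (x n) ∣
      e ^ (y n + z n) * Nat.factorial (y n + z n))
    (c C : ℝ) (hc : 0 < c)
    (hΘ : ∀ n, c * y n ≤ (x n : ℝ) ∧ (x n : ℝ) ≤ C * y n) :
    e = f := by
  have hyT : Tendsto y atTop atTop := tendsto_atTop_mono hy tendsto_id
  have hxT : Tendsto x atTop atTop := tendsto_natCast_atTop_iff.mp <|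
    tendsto_atTop_mono (fun n => (hΘ n).1)
      ((tendsto_natCast_atTop_atTop.comp hyT).const_mul_atTop hc)
  have hxy : (fun n => (x n : ℝ)) =O[atTop] (fun n => (y n : ℝ)) :=
    .of_bound C (.of_forall fun n => by simpa using (hΘ n).2)
  have hzy : (fun n => (z n : ℝ)) =o[atTop] (fun n => (y n : ℝ)) :=
    ((isLittleO_iff_tendsto' ((eventually_ne_atTop 0).mono fun n hn h =>
      absurd (Nat.cast_eq_zero.mp h) hn)).mpr hz).trans_isBigO
      (.of_bound 1 (.of_forall fun n => by simpa using hy n))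
  have key (p : ℕ) [Fact p.Prime] := isLittleO_padicGrowthRate_mul_sub (p := p)
    (by omega : e ≠ 0) (by omega : f ≠ 0) hxT hyT hxy hzy hdiv1 hdiv2
  obtain ⟨q, hq, hqprime⟩ := Nat.exists_infinite_primes (max e f + 1)
  have := Fact.mk hqprime
  have hxy_sub : (fun n => (x n : ℝ) - y n) =o[atTop] (fun n => (y n : ℝ)) := by
    simpa [padicGrowthRate_eq_one (Nat.not_dvd_of_pos_of_lt he (by omega) : ¬q ∣ e),
      padicGrowthRate_eq_one (Nat.not_dvd_of_pos_of_lt hf (by omega) : ¬q ∣ f)] using key q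
  refine (Nat.eq_iff_prime_padicValNat_eq e f (by omega) (by omega)).mpr fun p hp => ?_
  have := Fact.mk hp
  refine (padicValNat_eq_of_padicGrowthRate_eq ?_).symm
  exact_mod_cast eq_of_isLittleO_sub
    ((hyT.eventually_ne_atTop 0).mono fun n hn => Nat.cast_ne_zero.mpr hn) hxy_sub (key p)

/-- Arithmetic core of Theorem 8.24 (lampdesigner rigidity): if `e, f ≥ 1` and
there are sequences `(x_n), (y_n)` with `y_n ≥ n`, `x_n = Θ(y_n)` and a
sublinear `(z_n)` such that `e^{y_n} y_n! ∣ f^{x_n} x_n! ∣ e^{y_n+z_n} (y_n+z_n)!`,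
then `e = f`. -/
theorem lampdesigner_arithmetic (e f : ℕ) (he : 1 ≤ e) (hf : 1 ≤ f)
    (x y z : ℕ → ℕ)
    (hx : ∀ n, 0 < x n) (hy0 : ∀ n, 0 < y n) (hy : ∀ n, n ≤ y n)
    (hz : Filter.Tendsto (fun n => (z n : ℝ) / n) Filter.atTop (nhds 0))
    (hdiv1 : ∀ n, e ^ y n * Nat.factorial (y n) ∣ f ^ x n * Nat.factorial (x n))
    (hdiv2 : ∀ n, f ^ x n * Nat.factorial (x n) ∣
      e ^ (y n + z n) * Nat.factorial (y n + z n))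
    (c C : ℝ) (hc : 0 < c) (hC : 0 < C)
    (hΘ : ∀ n, c * y n ≤ (x n : ℝ) ∧ (x n : ℝ) ≤ C * y n) :
    e = f :=
  lampdesigner_arithmetic_general e f he hf x y z hy hz hdiv1 hdiv2 c C hc hΘ
end

section
/- Suppose $h, k \geq 2$ are integers (cardinalities of finite fields of distinct characteristics), $p$ is a prime with $p \mid h$ and $p \nmid k$, and there exists a sequence of positive integers $(x_n)$ with $x_n = O(n)$ such that for every $n \geq 1$, the number $\Lambda_h(n) := h^{n(n-1)/2} \prod_{j=1}^{n}(h^j - 1)$ divides $\Lambda_k(x_n) := k^{x_n(x_n-1)/2} \prod_{j=1}^{x_n}(k^j - 1)$. Then a contradiction follows; i.e., no such sequence exists. Equivalently: if $p \mid h$ and $p \nmid k$, then for every $C > 0$ there exists $n$ such that $\Lambda_h(n)$ does not divide $\Lambda_k(m)$ for any $m \leq C n$. -/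
/-- The lamp growth sequence of a lampcloner group over a field of order `a`:
`Λ_a(n) = a^{n(n-1)/2} ∏_{j=1}^n (a^j - 1) = |GL(n, 𝔽_a)|`. -/
def lampclonerGrowth (a n : ℕ) : ℕ :=
  a ^ (n * (n - 1) / 2) * ∏ j ∈ Finset.Icc 1 n, (a ^ j - 1)

private lemma fac_le_of_dvd {a b p : ℕ} (hb : b ≠ 0) (hab : a ∣ b) :
    a.factorization p ≤ b.factorization p := by
  rcases eq_or_ne a 0 with rfl | ha
  · exact absurd (zero_dvd_iff.mp hab) hb
  · exact (Nat.factorization_le_iff_dvd ha hb).mpr hab p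

/-- Uniform LTE-type bound: `val_p(k^j - 1) ≤ E + val_p j` for some constant `E`. -/
private lemma exists_val_bound (p k : ℕ) (hp : p.Prime) (hk : 2 ≤ k) (hpk : ¬ p ∣ k) :
    ∃ E : ℕ, ∀ j : ℕ, 1 ≤ j → (k ^ j - 1).factorization p ≤ E + j.factorization p := by
  haveI : Fact p.Prime := ⟨hp⟩
  rcases hp.eq_two_or_odd' with rfl | hodd
  · -- p = 2
    refine ⟨(k + 1).factorization 2 + (k - 1).factorization 2, fun j hj => ?_⟩
    have hj0 : j ≠ 0 := by omega
    have hk1 : (1 : ℕ) < k := by omega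
    have hkodd : 2 ∣ k - 1 := by omega
    have hne : k ^ (2 * j) - 1 ≠ 0 := by
      have : 2 ≤ k ^ (2 * j) := le_trans hk (Nat.le_self_pow (by omega) k)
      omega
    have hdvd : k ^ j - 1 ∣ k ^ (2 * j) - 1 := by
      have h2 := Nat.sub_dvd_pow_sub_pow (k ^ j) 1 2
      simpa [← pow_mul, mul_comm j 2] using h2
    have h1 : (k ^ j - 1).factorization 2 ≤ (k ^ (2 * j) - 1).factorization 2 :=
      fac_le_of_dvd hne hdvd
    have hlte := padicValNat.pow_two_sub_pow (x := k) (y := 1) hk1 hkodd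
      (by omega) (n := 2 * j) (by omega) (even_two_mul j)
    simp only [one_pow] at hlte
    have h2j : padicValNat 2 (2 * j) = 1 + padicValNat 2 j := by
      rw [padicValNat.mul (by norm_num) hj0, padicValNat.self (by norm_num)]
    rw [Nat.factorization_def _ hp, Nat.factorization_def _ hp, Nat.factorization_def _ hp,
      Nat.factorization_def _ hp] at *
    omega
  · -- p odd
    refine ⟨(k ^ (p - 1) - 1).factorization p, fun j hj => ?_⟩
    by_cases hd : p ∣ k ^ j - 1
    swap
    · simp [Nat.factorization_eq_zero_of_not_dvd hd]
    have hj0 : j ≠ 0 := by omega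
    have hk0 : (k : ZMod p) ≠ 0 := by
      simpa [ZMod.natCast_eq_zero_iff] using hpk
    have hkj1 : 1 ≤ k ^ j := Nat.one_le_pow _ _ (by omega)
    have hpow : (k : ZMod p) ^ j = 1 := by
      have h0 : ((k ^ j - 1 : ℕ) : ZMod p) = 0 :=
        (ZMod.natCast_eq_zero_iff _ _).mpr hd
      rw [Nat.cast_sub hkj1] at h0
      push_cast at h0
      rwa [sub_eq_zero] at h0
    set d := orderOf (k : ZMod p) with hdd
    have hdj : d ∣ j := orderOf_dvd_of_pow_eq_one hpow
    obtain ⟨t, ht⟩ := hdj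
    have hd0 : d ≠ 0 := by rintro h; rw [h] at ht; omega
    have ht0 : t ≠ 0 := by rintro h; rw [h] at ht; omega
    have hkd1 : 1 ≤ k ^ d := Nat.one_le_pow _ _ (by omega)
    have hpd : p ∣ k ^ d - 1 := by
      have h0 : ((k ^ d - 1 : ℕ) : ZMod p) = 0 := by
        rw [Nat.cast_sub hkd1]
        push_cast
        rw [hdd, pow_orderOf_eq_one, sub_self]
      exact (ZMod.natCast_eq_zero_iff _ _).mp h0
    have hdp1 : d ∣ p - 1 :=
      orderOf_dvd_of_pow_eq_one (ZMod.pow_card_sub_one_eq_one hk0)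
    have hlt : 1 < k ^ d := by
      calc 1 < k := by omega
      _ ≤ k ^ d := Nat.le_self_pow hd0 k
    have hnk : ¬ p ∣ k ^ d := fun hc => hpk (hp.dvd_of_dvd_pow hc)
    have lte : padicValNat p ((k ^ d) ^ t - 1 ^ t)
        = padicValNat p (k ^ d - 1) + padicValNat p t :=
      padicValNat.pow_sub_pow hodd hlt (by simpa using hpd) hnk ht0
    simp only [one_pow, ← pow_mul, ← ht] at lte
    have hE : (k ^ d - 1).factorization p ≤ (k ^ (p - 1) - 1).factorization p := by
      obtain ⟨s, hs⟩ := hdp1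
      have hdvd : k ^ d - 1 ∣ k ^ (p - 1) - 1 := by
        have h2 := Nat.sub_dvd_pow_sub_pow (k ^ d) 1 s
        simpa [← pow_mul, ← hs] using h2
      have hne : k ^ (p - 1) - 1 ≠ 0 := by
        have h1 : 1 ≤ p - 1 := by have := hp.two_le; omega
        have : 2 ≤ k ^ (p - 1) := le_trans hk (Nat.le_self_pow (by omega) k)
        omega
      exact fac_le_of_dvd hne hdvd
    have htj : t.factorization p ≤ j.factorization p :=
      fac_le_of_dvd hj0 (Dvd.intro_left d ht.symm)
    rw [Nat.factorization_def _ hp] at *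
    rw [lte]
    omega

/-- The total valuation bound: `val_p(Λ_k(m)) ≤ m * (E + 1)`. -/
private lemma growth_val_le (p k : ℕ) (hp : p.Prime) (hk : 2 ≤ k) (hpk : ¬ p ∣ k)
    (E : ℕ) (hE : ∀ j : ℕ, 1 ≤ j → (k ^ j - 1).factorization p ≤ E + j.factorization p)
    (m : ℕ) : (lampclonerGrowth k m).factorization p ≤ m * (E + 1) := by
  haveI : Fact p.Prime := ⟨hp⟩
  have hfac : ∀ j ∈ Finset.Icc 1 m, k ^ j - 1 ≠ 0 := by
    intro j hj
    simp only [Finset.mem_Icc] at hj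
    have : 2 ≤ k ^ j := le_trans hk (Nat.le_self_pow (by omega) k)
    omega
  have hprod : (∏ j ∈ Finset.Icc 1 m, (k ^ j - 1)) ≠ 0 := Finset.prod_ne_zero_iff.mpr hfac
  have hpowne : (k : ℕ) ^ (m * (m - 1) / 2) ≠ 0 := pow_ne_zero _ (by omega)
  rw [lampclonerGrowth, Nat.factorization_mul hpowne hprod]
  simp only [Finsupp.coe_add, Pi.add_apply]
  have h1 : ((k : ℕ) ^ (m * (m - 1) / 2)).factorization p = 0 := by
    rw [Nat.factorization_pow]
    simp [Nat.factorization_eq_zero_of_not_dvd hpk]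
  rw [h1, zero_add, Nat.factorization_prod hfac, Finset.sum_apply']
  have hsum : ∑ j ∈ Finset.Icc 1 m, (k ^ j - 1).factorization p
      ≤ ∑ j ∈ Finset.Icc 1 m, (E + j.factorization p) := by
    apply Finset.sum_le_sum
    intro j hj
    simp only [Finset.mem_Icc] at hj
    exact hE j hj.1
  refine le_trans hsum ?_
  have hfactval : ∑ j ∈ Finset.Icc 1 m, j.factorization p ≤ m := by
    have hIco : Finset.Icc 1 m = Finset.Ico 1 (m + 1) := by rw [Finset.Ico_add_one_right_eq_Icc]
    have heq : ∑ j ∈ Finset.Icc 1 m, j.factorization p = (Nat.factorial m).factorization p := by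
      rw [← Finset.prod_Ico_id_eq_factorial m, Nat.factorization_prod (fun j hj => by
        simp only [Finset.mem_Ico] at hj; omega), Finset.sum_apply', hIco]
    rw [heq, Nat.factorization_def _ hp]
    have hleg := sub_one_mul_padicValNat_factorial (p := p) m
    have hle1 : padicValNat p (Nat.factorial m) ≤ (p - 1) * padicValNat p (Nat.factorial m) :=
      le_mul_of_one_le_left (Nat.zero_le _) (by have := hp.two_le; omega)
    exact le_trans hle1 (by rw [hleg]; exact Nat.sub_le _ _)
  rw [Finset.sum_add_distrib, Finset.sum_const, Nat.card_Icc, smul_eq_mul]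
  have h5 : (m + 1 - 1) * E = m * E := by simp
  rw [h5]
  calc m * E + ∑ j ∈ Finset.Icc 1 m, j.factorization p ≤ m * E + m :=
        Nat.add_le_add_left hfactval _
    _ = m * (E + 1) := by ring

/-- Core of Theorem 8.16: if `p` is a prime dividing `h` but not `k`
(e.g. `h, k` orders of finite fields of distinct characteristics), then there is
no sequence `x_n = O(n)` with `Λ_h(n) ∣ Λ_k(x_n)` for all `n ≥ 1`; equivalently,
for every `C > 0` there is some `n` such that `Λ_h(n)` divides no `Λ_k(m)` with
`m ≤ C n`. -/
theorem lampcloner_characteristic (h k p : ℕ) (hh : 2 ≤ h) (hk : 2 ≤ k) (hp : p.Prime)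
    (hph : p ∣ h) (hpk : ¬ p ∣ k) :
    (¬ ∃ x : ℕ → ℕ, (∃ C : ℝ, 0 < C ∧ ∀ n : ℕ, 1 ≤ n → (x n : ℝ) ≤ C * n) ∧
      ∀ n : ℕ, 1 ≤ n → lampclonerGrowth h n ∣ lampclonerGrowth k (x n)) ∧
    (∀ C : ℝ, 0 < C → ∃ n : ℕ, 1 ≤ n ∧
      ∀ m : ℕ, (m : ℝ) ≤ C * n → ¬ lampclonerGrowth h n ∣ lampclonerGrowth k m) := by
  obtain ⟨E, hE⟩ := exists_val_bound p k hp hk hpk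
  have hlow : ∀ n : ℕ, n * (n - 1) / 2 ≤ (lampclonerGrowth h n).factorization p := by
    intro n
    have hfac : ∀ j ∈ Finset.Icc 1 n, h ^ j - 1 ≠ 0 := by
      intro j hj
      simp only [Finset.mem_Icc] at hj
      have : 2 ≤ h ^ j := le_trans hh (Nat.le_self_pow (by omega) h)
      omega
    have hprod : (∏ j ∈ Finset.Icc 1 n, (h ^ j - 1)) ≠ 0 := Finset.prod_ne_zero_iff.mpr hfac
    have hpowne : (h : ℕ) ^ (n * (n - 1) / 2) ≠ 0 := pow_ne_zero _ (by omega)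
    rw [lampclonerGrowth, Nat.factorization_mul hpowne hprod]
    simp only [Finsupp.coe_add, Pi.add_apply]
    have h1 : n * (n - 1) / 2 ≤ ((h : ℕ) ^ (n * (n - 1) / 2)).factorization p := by
      rw [Nat.factorization_pow]
      have hpos : 1 ≤ h.factorization p := hp.factorization_pos_of_dvd (by omega) hph
      simp only [Finsupp.smul_apply, smul_eq_mul]
      exact le_mul_of_one_le_right (Nat.zero_le _) hpos
    omega
  have hkne : ∀ m : ℕ, lampclonerGrowth k m ≠ 0 := by
    intro m
    rw [lampclonerGrowth]
    exact mul_ne_zero (pow_ne_zero _ (by omega)) (Finset.prod_ne_zero_iff.mpr (fun j hj => by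
      simp only [Finset.mem_Icc] at hj
      have : 2 ≤ k ^ j := le_trans hk (Nat.le_self_pow (by omega) k)
      omega))
  have key : ∀ C : ℝ, 0 < C → ∃ n : ℕ, 1 ≤ n ∧
      ∀ m : ℕ, (m : ℝ) ≤ C * n → ¬ lampclonerGrowth h n ∣ lampclonerGrowth k m := by
    intro C hC
    set q : ℕ := ⌈2 * C * ((E : ℝ) + 1)⌉₊ with hq
    refine ⟨q + 2, by omega, fun m hm hdvd => ?_⟩
    have hval : (q + 2) * (q + 2 - 1) / 2 ≤ m * (E + 1) :=
      le_trans (le_trans (hlow _) (fac_le_of_dvd (hkne m) hdvd))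
        (growth_val_le p k hp hk hpk E hE m)
    rw [show q + 2 - 1 = q + 1 from rfl] at hval
    have hev : 2 ∣ (q + 2) * (q + 1) := by
      rw [mul_comm]
      exact (Nat.even_mul_succ_self (q + 1)).two_dvd
    obtain ⟨c, hc⟩ := hev
    have hdiv : (q + 2) * (q + 1) / 2 = c := by
      rw [hc]; exact Nat.mul_div_cancel_left c two_pos
    rw [hdiv] at hval
    have h3 : (q + 2) * (q + 1) ≤ 2 * (m * (E + 1)) := by
      rw [hc]; exact Nat.mul_le_mul (le_refl 2) hval
    have hval2 : ((q : ℝ) + 2) * ((q : ℝ) + 1) ≤ 2 * ((m : ℝ) * ((E : ℝ) + 1)) := by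
      exact_mod_cast h3
    have hqle : 2 * C * ((E : ℝ) + 1) ≤ (q : ℝ) := by
      rw [hq]; exact Nat.le_ceil _
    have hm' : (m : ℝ) ≤ C * ((q : ℝ) + 2) := by
      push_cast at hm; convert hm using 2
    have hE1 : (0 : ℝ) < (E : ℝ) + 1 := by positivity
    have hq2 : (0 : ℝ) < (q : ℝ) + 2 := by positivity
    nlinarith [mul_le_mul_of_nonneg_right hqle hq2.le,
      mul_le_mul_of_nonneg_left hm' (by positivity : (0 : ℝ) ≤ 2 * ((E : ℝ) + 1))]
  refine ⟨?_, key⟩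
  rintro ⟨x, ⟨C, hC, hx⟩, hdvd⟩
  obtain ⟨n, hn1, hn⟩ := key C hC
  exact hn (x n) (hx n hn1) (hdvd n hn1)
end

section
/- Let $X$ be a set, $F$ a group, and for each subset $S \subseteq X$ define $L(S) := \ast^{\mathfrak{n}_2}_{s \in S} F$, the 2-nilpotent product of copies of $F$ indexed by $S$ (viewed as subgroups of $L(X)$ via the natural maps). Given pairwise conditions $R \cap S = R \cap T = S \cap T = R \cap U = \emptyset$ for subsets $R, S, T, U \subseteq X$, the inclusion $L(R)L(S)[R,S] \cdot L(U) \,\cap\, L(R)L(T)[R,T] \subseteq L(R)L(T)$ holds, where $[R,S]$ denotes the (central) subgroup of $L(X)$ generated by commutators $[r, s]$ with $r$ in the copy of $F$ indexed by an element of $R$ and $s$ in a copy indexed by an element of $S$. In particular, the halo of 2-nilpotent products is full. -/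
open scoped commutatorElement

/-- The subgroup of triple commutators defining the 2-nilpotent product of a
family of groups. -/
def nilRelI (ι : Type*) (G : ι → Type*) [∀ i, Group (G i)] : Subgroup (Monoid.CoprodI G) :=
  Subgroup.normalClosure {w : Monoid.CoprodI G | ∃ x y z : Monoid.CoprodI G, w = ⁅⁅x, y⁆, z⁆}

instance (ι : Type*) (G : ι → Type*) [∀ i, Group (G i)] : (nilRelI ι G).Normal :=
  Subgroup.normalClosure_normal

/-- The 2-nilpotent product of copies of `F` indexed by `ι`. -/
abbrev NilProdI (ι : Type*) (G : ι → Type*) [∀ i, Group (G i)] :=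
  Monoid.CoprodI G ⧸ nilRelI ι G

/-- The canonical map from the copy of `F` indexed by `x`. -/
def nilOf (X F : Type*) [Group F] (x : X) : F →* NilProdI X (fun _ => F) :=
  (QuotientGroup.mk' (nilRelI X fun _ => F)).comp (Monoid.CoprodI.of (M := fun _ : X => F) (i := x))

/-- `L(S)`: the subgroup of the 2-nilpotent product generated by the copies of
`F` indexed by elements of `S`. -/
def nilL (X F : Type*) [Group F] (S : Set X) : Subgroup (NilProdI X (fun _ => F)) :=
  ⨆ (s : X) (_ : s ∈ S), (nilOf X F s).range

/-- `[R,S]`: the subgroup generated by the commutators `[r,s]` with `r` in a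
copy of `F` indexed by `R` and `s` in a copy indexed by `S`. -/
def nilComm (X F : Type*) [Group F] (R S : Set X) : Subgroup (NilProdI X (fun _ => F)) :=
  Subgroup.closure {w : NilProdI X (fun _ => F) |
    ∃ (i : X) (_ : i ∈ R) (j : X) (_ : j ∈ S) (a b : F), w = ⁅nilOf X F i a, nilOf X F j b⁆}

section Aux

open scoped Classical

variable {X F : Type*} [Group F]

/-- All triple commutators vanish in the 2-nilpotent product. -/
lemma nilTrip_eq_one (x y z : NilProdI X (fun _ => F)) : ⁅⁅x, y⁆, z⁆ = 1 := by
  obtain ⟨x, rfl⟩ := QuotientGroup.mk'_surjective (nilRelI X fun _ => F) x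
  obtain ⟨y, rfl⟩ := QuotientGroup.mk'_surjective (nilRelI X fun _ => F) y
  obtain ⟨z, rfl⟩ := QuotientGroup.mk'_surjective (nilRelI X fun _ => F) z
  rw [← map_commutatorElement, ← map_commutatorElement, QuotientGroup.mk'_apply,
    QuotientGroup.eq_one_iff]
  exact Subgroup.subset_normalClosure ⟨x, y, z, rfl⟩

/-- Commutators are central in the 2-nilpotent product. -/
lemma nilCommute (x y z : NilProdI X (fun _ => F)) : Commute ⁅x, y⁆ z :=
  commutatorElement_eq_one_iff_commute.mp (nilTrip_eq_one x y z)

/-- The retraction killing the factors outside `Y`. -/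
noncomputable def nilProj (F : Type*) [Group F] (Y : Set X) :
    NilProdI X (fun _ => F) →* NilProdI X (fun _ => F) :=
  QuotientGroup.lift _ (Monoid.CoprodI.lift fun i => if i ∈ Y then nilOf X F i else 1) (by
    intro w hw
    refine Subgroup.normalClosure_le_normal
      (N := MonoidHom.ker (Monoid.CoprodI.lift fun i => if i ∈ Y then nilOf X F i else 1)) ?_ hw
    rintro w ⟨x, y, z, rfl⟩
    simp [MonoidHom.mem_ker, map_commutatorElement, nilTrip_eq_one])

lemma nilProj_of (Y : Set X) (x : X) (a : F) :
    nilProj F Y (nilOf X F x a) = if x ∈ Y then nilOf X F x a else 1 := by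
  classical
  show nilProj F Y (QuotientGroup.mk (Monoid.CoprodI.of (M := fun _ : X => F) a)) = _
  rw [nilProj, QuotientGroup.lift_mk', Monoid.CoprodI.lift_of]
  split_ifs <;> simp

lemma nilL_fix {Y S : Set X} (h : S ⊆ Y) {g : NilProdI X (fun _ => F)}
    (hg : g ∈ nilL X F S) : nilProj F Y g = g := by
  have : nilL X F S ≤ (nilProj F Y).eqLocus (MonoidHom.id _) := by
    refine iSup_le fun s => iSup_le fun hs => ?_
    rintro _ ⟨a, rfl⟩
    show nilProj F Y _ = _
    rw [nilProj_of, if_pos (h hs)]; rfl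
  exact this hg

lemma nilL_kill {Y S : Set X} (h : ∀ s ∈ S, s ∉ Y) {g : NilProdI X (fun _ => F)}
    (hg : g ∈ nilL X F S) : nilProj F Y g = 1 := by
  have : nilL X F S ≤ (nilProj F Y).ker := by
    refine iSup_le fun s => iSup_le fun hs => ?_
    rintro _ ⟨a, rfl⟩
    rw [MonoidHom.mem_ker, nilProj_of, if_neg (h s hs)]
  exact this hg

lemma nilComm_fix {Y R S : Set X} (hR : R ⊆ Y) (hS : S ⊆ Y) {g : NilProdI X (fun _ => F)}
    (hg : g ∈ nilComm X F R S) : nilProj F Y g = g := by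
  have : nilComm X F R S ≤ (nilProj F Y).eqLocus (MonoidHom.id _) := by
    rw [nilComm, Subgroup.closure_le]
    rintro _ ⟨i, hi, j, hj, a, b, rfl⟩
    show nilProj F Y _ = _
    rw [map_commutatorElement, nilProj_of, nilProj_of, if_pos (hR hi), if_pos (hS hj)]; rfl
  exact this hg

lemma nilComm_kill {Y R S : Set X}
    (h : (∀ i ∈ R, i ∉ Y) ∨ (∀ j ∈ S, j ∉ Y)) {g : NilProdI X (fun _ => F)}
    (hg : g ∈ nilComm X F R S) : nilProj F Y g = 1 := by
  have : nilComm X F R S ≤ (nilProj F Y).ker := by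
    rw [nilComm, Subgroup.closure_le]
    rintro _ ⟨i, hi, j, hj, a, b, rfl⟩
    rw [SetLike.mem_coe, MonoidHom.mem_ker, map_commutatorElement, nilProj_of, nilProj_of]
    rcases h with h | h
    · rw [if_neg (h i hi)]; simp
    · rw [if_neg (h j hj)]; simp
  exact this hg

lemma nilComm_central {R S : Set X} {d : NilProdI X (fun _ => F)}
    (hd : d ∈ nilComm X F R S) (z : NilProdI X (fun _ => F)) : Commute d z := by
  have : nilComm X F R S ≤ Subgroup.center _ := by
    rw [nilComm, Subgroup.closure_le]
    rintro _ ⟨i, hi, j, hj, a, b, rfl⟩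
    exact Subgroup.mem_center_iff.mpr fun z => (nilCommute _ _ z).symm
  exact (Subgroup.mem_center_iff.mp (this hd) z).symm

end Aux

/-- Lemma 3.26 (the halo of 2-nilpotent products is full): if
`R ∩ S = R ∩ T = S ∩ T = R ∩ U = ∅`, then
`L(R)L(S)[R,S] · L(U) ∩ L(R)L(T)[R,T] ⊆ L(R)L(T)`. -/
theorem nilprod_halo_full {X F : Type*} [Group F] (R S T U : Set X)
    (hRS : R ∩ S = ∅) (hRT : R ∩ T = ∅) (hST : S ∩ T = ∅) (hRU : R ∩ U = ∅)
    (g : NilProdI X (fun _ => F))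
    (h1 : ∃ a b d e, a ∈ nilL X F R ∧ b ∈ nilL X F S ∧ d ∈ nilComm X F R S ∧
      e ∈ nilL X F U ∧ g = a * b * d * e)
    (h2 : ∃ a c d, a ∈ nilL X F R ∧ c ∈ nilL X F T ∧ d ∈ nilComm X F R T ∧
      g = a * c * d) :
    ∃ a c, a ∈ nilL X F R ∧ c ∈ nilL X F T ∧ g = a * c := by
  obtain ⟨a₁, b, d₁, e, ha₁, hb, hd₁, he, hg₁⟩ := h1
  obtain ⟨a₂, c, d₂, ha₂, hc, hd₂, hg₂⟩ := h2
  have hSR : ∀ s ∈ S, s ∉ R := fun s hs hr =>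
    Set.eq_empty_iff_forall_notMem.mp hRS s ⟨hr, hs⟩
  have hTR : ∀ t ∈ T, t ∉ R := fun t ht hr =>
    Set.eq_empty_iff_forall_notMem.mp hRT t ⟨hr, ht⟩
  have hUR : ∀ u ∈ U, u ∉ R := fun u hu hr =>
    Set.eq_empty_iff_forall_notMem.mp hRU u ⟨hr, hu⟩
  have hRSc : R ⊆ Sᶜ := fun r hr hs => Set.eq_empty_iff_forall_notMem.mp hRS r ⟨hr, hs⟩
  have hTSc : T ⊆ Sᶜ := fun t ht hs => Set.eq_empty_iff_forall_notMem.mp hST t ⟨hs, ht⟩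
  have key : a₁ * b * d₁ * e = a₂ * c * d₂ := hg₁.symm.trans hg₂
  -- Project onto `L(R)` to get `a₁ = a₂`.
  have ha : a₁ = a₂ := by
    have := congrArg (nilProj F R) key
    rwa [map_mul, map_mul, map_mul, map_mul, map_mul,
      nilL_fix (Set.Subset.refl R) ha₁, nilL_kill hSR hb, nilComm_kill (Or.inr hSR) hd₁,
      nilL_kill hUR he, nilL_fix (Set.Subset.refl R) ha₂, nilL_kill hTR hc,
      nilComm_kill (Or.inr hTR) hd₂, mul_one, mul_one, mul_one, mul_one, mul_one] at this
  have key2 : b * d₁ * e = c * d₂ := by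
    rw [ha] at key
    have h' := key
    rw [mul_assoc (a₂ * b), mul_assoc a₂, mul_assoc a₂ c] at h'
    have h'' := mul_left_cancel h'
    rw [← mul_assoc] at h''
    exact h''
  -- Project onto `L(X \ R)` to get `b * e = c`.
  have hbe : b * e = c := by
    have hRRc : ∀ r ∈ R, r ∉ Rᶜ := fun r hr hrc => hrc hr
    have hSRc : S ⊆ Rᶜ := hSR
    have hURc : U ⊆ Rᶜ := hUR
    have hTRc : T ⊆ Rᶜ := hTR
    have := congrArg (nilProj F Rᶜ) key2
    rwa [map_mul, map_mul, map_mul,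
      nilL_fix hSRc hb, nilComm_kill (Or.inl hRRc) hd₁,
      nilL_fix hURc he, nilL_fix hTRc hc,
      nilComm_kill (Or.inl hRRc) hd₂, mul_one, mul_one] at this
  -- Centrality gives `d₁ = d₂`.
  have hd : d₁ = d₂ := by
    have h1 : b * d₁ * e = (b * e) * d₁ := by
      rw [mul_assoc, (nilComm_central hd₁ e).eq, ← mul_assoc]
    have : (b * e) * d₁ = (b * e) * d₂ := by
      rw [← h1, key2, hbe]
    exact mul_left_cancel this
  -- Project onto `L(X \ S)` to get `d₂ = 1`.
  have hd2 : d₂ = 1 := by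
    have hSSc : ∀ s ∈ S, s ∉ Sᶜ := fun s hs hsc => hsc hs
    have := congrArg (nilProj F Sᶜ) (hd.symm)
    rwa [nilComm_fix hRSc hTSc hd₂, nilComm_kill (Or.inr hSSc) hd₁] at this
  exact ⟨a₂, c, ha₂, hc, by rw [hg₂, hd2, mul_one]⟩
end
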